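/- arXiv:2404.17566 — 2 statements merged into one kernel-verified Lean document; each statement's English description precedes it below -/
import Mathlib

section
/- Let l be a prime number and n a nonnegative integer such that l^n divides q − 1. Let β ∈ F^* and let μ ∈ Ω satisfy μ^{l^n} = β. Let s be the least nonnegative integer such that θ := μ^{l^s} lies in F. Then the polynomial X^{l^s} − θ is irreducible in F[X]. -/
/-!
Let `q = |F|` and `ζ = μ ^ (q - 1)`. Since `μ ≠ 0`, a power `μ ^ m` lies in `F` iff `ζ ^ m = 1`,
so the minimality of `s` says that `ζ` has order exactly `l ^ s`. As `l ^ s ∣ q - 1`, `ζ` is fixed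
by Frobenius and `μ ^ q ^ k = ζ ^ k * μ`; taking `k = d = [F(μ) : F]` gives `ζ ^ d = 1`, hence
`l ^ s ≤ d`. So the monic polynomial `X ^ l ^ s - θ`, which vanishes at `μ`, is its minimal
polynomial.
-/

open IntermediateField Polynomial

theorem pow_pow_eq_pow_mul_of_pow_eq_mul {M : Type*} [CommMonoid M] {n : ℕ} {x ζ : M}
    (hζ : ζ ^ n = ζ) (hx : x ^ n = ζ * x) (k : ℕ) : x ^ n ^ k = ζ ^ k * x := by
  induction k with
  | zero => simp
  | succ k ih =>
    rw [pow_succ, pow_mul, ih, mul_pow, ← pow_mul, mul_comm k, pow_mul, hζ, hx, pow_succ,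
      mul_assoc]

theorem orderOf_eq_prime_pow_of_forall_pow_eq_one {G : Type*} [Monoid G] {x : G} {p s : ℕ}
    (hp : p.Prime) (hx : x ^ p ^ s = 1) (hmin : ∀ t, x ^ p ^ t = 1 → s ≤ t) :
    orderOf x = p ^ s := by
  obtain ⟨t, hts, hxt⟩ := (Nat.dvd_prime_pow hp).1 (orderOf_dvd_of_pow_eq_one hx)
  rw [hxt, le_antisymm hts (hmin t (hxt ▸ pow_orderOf_eq_one x))]

theorem irreducible_of_monic_of_aeval_eq_zero_of_natDegree_le {F K : Type*} [Field F] [Field K]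
    [Algebra F K] {x : K} (hx : IsIntegral F x) {p : F[X]} (hp : p.Monic) (hpx : aeval x p = 0)
    (hdeg : p.natDegree ≤ (minpoly F x).natDegree) : Irreducible p :=
  eq_of_monic_of_dvd_of_natDegree_le (minpoly.monic hx) hp (minpoly.dvd F x hpx) hdeg ▸
    minpoly.irreducible hx

section FiniteField

variable {F K : Type*} [Field F] [Fintype F] [Field K] [Algebra F K]

theorem FiniteField.splits_X_pow_card_sub_X_self : (X ^ Fintype.card F - X : F[X]).Splits := by
  rw [splits_iff_card_roots, FiniteField.roots_X_pow_card_sub_X, ← Finset.card_def,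
    Finset.card_univ, FiniteField.X_pow_card_sub_X_natDegree_eq _ Fintype.one_lt_card]

theorem FiniteField.mem_range_algebraMap_iff_pow_card_eq_self {x : K} :
    x ∈ (algebraMap F K).range ↔ x ^ Fintype.card F = x := by
  refine ⟨?_, fun hx ↦ splits_X_pow_card_sub_X_self.mem_range_of_isRoot
    (X_pow_card_sub_X_ne_zero F Fintype.one_lt_card) (by simp [hx])⟩
  rintro ⟨c, rfl⟩
  rw [← map_pow, pow_card]

theorem FiniteField.mem_range_algebraMap_iff_pow_card_sub_one_eq_one {x : K} (hx : x ≠ 0) :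
    x ∈ (algebraMap F K).range ↔ x ^ (Fintype.card F - 1) = 1 := by
  rw [mem_range_algebraMap_iff_pow_card_eq_self, ← pow_sub_one_mul Fintype.card_ne_zero,
    mul_eq_right₀ hx]

theorem FiniteField.pow_card_pow_natDegree_minpoly {x : K} (hx : IsIntegral F x) :
    x ^ Fintype.card F ^ (minpoly F x).natDegree = x := by
  have : FiniteDimensional F F⟮x⟯ := adjoin.finiteDimensional hx
  have : Finite F⟮x⟯ := Module.finite_of_finite F
  let : Fintype F⟮x⟯ := Fintype.ofFinite _
  have hcard : Fintype.card F⟮x⟯ = Fintype.card F ^ (minpoly F x).natDegree := by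
    rw [Module.card_eq_pow_finrank (K := F), adjoin.finrank hx]
  simpa [hcard] using congrArg (algebraMap F⟮x⟯ K) (pow_card (AdjoinSimple.gen F x))

end FiniteField

theorem stmt1_general (q : ℕ) (F Ω : Type*) [Field F] [Fintype F] (hq : Fintype.card F = q)
    [Field Ω] [Algebra F Ω]
    (l : ℕ) (hl : l.Prime) (n : ℕ) (hdvd : l ^ n ∣ q - 1)
    (β : F) (hβ : β ≠ 0) (μ : Ω) (hμ : μ ^ l ^ n = algebraMap F Ω β)
    (s : ℕ) (hs : IsLeast {k : ℕ | μ ^ l ^ k ∈ (algebraMap F Ω).range} s)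
    (θ : F) (hθ : algebraMap F Ω θ = μ ^ l ^ s) :
    Irreducible (Polynomial.X ^ l ^ s - Polynomial.C θ) := by
  subst hq
  have hμ0 : μ ≠ 0 := by
    rintro rfl
    exact hβ (by simpa [hl.ne_zero] using hμ.symm)
  have hμint : IsIntegral F μ := .of_pow (pow_pos hl.pos n) (hμ ▸ isIntegral_algebraMap)
  set ζ := μ ^ (Fintype.card F - 1)
  have hζ (t : ℕ) : μ ^ t ∈ (algebraMap F Ω).range ↔ ζ ^ t = 1 := by
    rw [pow_right_comm]
    exact FiniteField.mem_range_algebraMap_iff_pow_card_sub_one_eq_one (pow_ne_zero _ hμ0)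
  have horder : orderOf ζ = l ^ s := orderOf_eq_prime_pow_of_forall_pow_eq_one hl
    ((hζ _).1 hs.1) fun t ht ↦ hs.2 ((hζ _).2 ht)
  have hζq : ζ ^ Fintype.card F = ζ := by
    have hsq : l ^ s ∣ Fintype.card F - 1 := (pow_dvd_pow l (hs.2 ⟨β, hμ.symm⟩)).trans hdvd
    rw [← pow_sub_one_mul Fintype.card_ne_zero, orderOf_dvd_iff_pow_eq_one.1 (horder ▸ hsq),
      one_mul]
  have hζd : ζ ^ (minpoly F μ).natDegree = 1 := by
    have := pow_pow_eq_pow_mul_of_pow_eq_mul hζq (pow_sub_one_mul Fintype.card_ne_zero μ).symm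
      (minpoly F μ).natDegree
    rwa [FiniteField.pow_card_pow_natDegree_minpoly hμint, eq_comm, mul_eq_right₀ hμ0] at this
  refine irreducible_of_monic_of_aeval_eq_zero_of_natDegree_le hμint
    (monic_X_pow_sub_C θ (pow_ne_zero s hl.ne_zero)) (by simp [hθ]) ?_
  rw [natDegree_X_pow_sub_C, ← horder]
  exact orderOf_le_of_pow_eq_one (minpoly.natDegree_pos hμint) hζd

/-- Let `F` be a finite field with `q` elements, `Ω` an algebraic closure of `F`.
Let `l` be a prime and `n ≥ 0` with `l ^ n ∣ q - 1`. Let `β ∈ F^*` and `μ ∈ Ω` with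
`μ ^ (l ^ n) = β`. Let `s` be the least nonnegative integer such that
`θ := μ ^ (l ^ s)` lies in `F`. Then `X ^ (l ^ s) - θ` is irreducible in `F[X]`. -/
theorem stmt1 (q : ℕ) (F Ω : Type*) [Field F] [Fintype F] (hq : Fintype.card F = q)
    [Field Ω] [Algebra F Ω] [IsAlgClosure F Ω]
    (l : ℕ) (hl : l.Prime) (n : ℕ) (hdvd : l ^ n ∣ q - 1)
    (β : F) (hβ : β ≠ 0) (μ : Ω) (hμ : μ ^ l ^ n = algebraMap F Ω β)
    (s : ℕ) (hs : IsLeast {k : ℕ | μ ^ l ^ k ∈ (algebraMap F Ω).range} s)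
    (θ : F) (hθ : algebraMap F Ω θ = μ ^ l ^ s) :
    Irreducible (Polynomial.X ^ l ^ s - Polynomial.C θ) :=
  stmt1_general q F Ω hq l hl n hdvd β hβ μ hμ s hs θ hθ
end

section
/- Let l be a prime number and κ ≥ 1 an integer such that l^κ divides q − 1. Let γ ∈ F^*, let d be a nonnegative integer, and set ε = (−1)^d·γ. Assume it is not the case that (l = 2, d is odd, and 2^{κ+1} does not divide q − 1). Then for any μ, ν ∈ Ω with μ^{l^κ} = ε and ν^{l^κ} = γ, one has F(μ) = F(ν). -/
open IntermediateField Polynomial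

/-!
Every `n`-th root of unity `z` in an extension of `F` with `n ∣ q - 1` satisfies `z ^ q = z`,
so it is a root of `X ^ q - X`, which splits over `F`; hence `z` lies in `F`. It therefore
suffices to find `b ∈ F` with `b ^ l ^ κ = (-1) ^ d`: then `μ / (b ν)` is an `l ^ κ`-th root
of unity, so `μ ∈ F^* ν`. Take `b = 1` for `d` even and `b = -1` for `l` odd; in the remaining
case `2 ^ (κ + 1) ∣ q - 1`, and in the cyclic group `F^*` a primitive `2 ^ (κ + 1)`-th root of
unity has `2 ^ κ`-th power `-1`.
-/

theorem IntermediateField.adjoin_simple_algebraMap_mul {F K : Type*} [Field F] [Field K]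
    [Algebra F K] {c : F} (hc : c ≠ 0) (x : K) : F⟮algebraMap F K c * x⟯ = F⟮x⟯ := by
  refine le_antisymm (adjoin_simple_le_iff.mpr ?_) (adjoin_simple_le_iff.mpr ?_)
  · exact mul_mem (algebraMap_mem _ c) (mem_adjoin_simple_self F x)
  · simpa [← mul_assoc, ← map_mul, hc] using
      mul_mem (algebraMap_mem _ c⁻¹) (mem_adjoin_simple_self F (algebraMap F K c * x))

namespace FiniteField

variable {F K : Type*} [Field F] [Fintype F] [Field K] [Algebra F K]

theorem X_pow_card_sub_X_splits : (X ^ Fintype.card F - X : F[X]).Splits := by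
  rw [splits_iff_card_roots, roots_X_pow_card_sub_X,
    X_pow_card_sub_X_natDegree_eq F Fintype.one_lt_card]
  rfl

theorem mem_range_algebraMap_of_pow_card_eq_self {x : K} (hx : x ^ Fintype.card F = x) :
    x ∈ (algebraMap F K).range :=
  X_pow_card_sub_X_splits.mem_range_of_isRoot (X_pow_card_sub_X_ne_zero F Fintype.one_lt_card)
    (by simp [hx])

theorem card_sub_one_ne_zero : Fintype.card F - 1 ≠ 0 :=
  Nat.sub_ne_zero_of_lt Fintype.one_lt_card

theorem mem_range_algebraMap_of_pow_eq_one {n : ℕ} (hn : n ∣ Fintype.card F - 1) {z : K}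
    (hz : z ^ n = 1) : z ∈ (algebraMap F K).range := by
  obtain ⟨k, hk⟩ := hn
  refine mem_range_algebraMap_of_pow_card_eq_self ?_
  rw [← Nat.sub_add_cancel Fintype.card_pos, pow_succ, hk, pow_mul, hz, one_pow, one_mul]

theorem exists_eq_algebraMap_mul_of_pow_eq_pow {n : ℕ} (hn : n ∣ Fintype.card F - 1) {x y : K}
    (hy : y ≠ 0) (hxy : x ^ n = y ^ n) : ∃ c : F, c ≠ 0 ∧ x = algebraMap F K c * y := by
  have hz : (x / y) ^ n = 1 := by rw [div_pow, hxy, div_self (pow_ne_zero n hy)]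
  obtain ⟨c, hc⟩ := mem_range_algebraMap_of_pow_eq_one hn hz
  refine ⟨c, ?_, by rw [hc, div_mul_cancel₀ x hy]⟩
  rintro rfl
  rw [← hc, map_zero, zero_pow (ne_zero_of_dvd_ne_zero card_sub_one_ne_zero hn)] at hz
  exact zero_ne_one hz

theorem exists_pow_eq_neg_one {n : ℕ} (hn : 2 * n ∣ Fintype.card F - 1) :
    ∃ b : F, b ^ n = -1 := by
  classical
  have hn0 : n ≠ 0 := right_ne_zero_of_mul (ne_zero_of_dvd_ne_zero card_sub_one_ne_zero hn)
  obtain ⟨g, hg⟩ := IsCyclic.exists_ofOrder_eq_natCard (α := Fˣ)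
  rw [Nat.card_eq_fintype_card, Fintype.card_units, ← orderOf_units] at hg
  have hζ := (hg ▸ IsPrimitiveRoot.orderOf (g : F)).pow_of_dvd
    ((Nat.div_ne_zero_iff_of_dvd hn).mpr ⟨card_sub_one_ne_zero, by positivity⟩)
    (Nat.div_dvd_of_dvd hn)
  rw [Nat.div_div_self hn card_sub_one_ne_zero] at hζ
  have := hζ.pow_of_dvd hn0 (dvd_mul_left n 2)
  rw [Nat.mul_div_cancel _ (Nat.pos_of_ne_zero hn0)] at this
  exact ⟨_, this.eq_neg_one_of_two_right⟩

theorem exists_pow_prime_pow_eq_neg_one_pow {l κ d : ℕ} (hl : l.Prime)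
    (hexc : ¬ (l = 2 ∧ Odd d ∧ ¬ 2 ^ (κ + 1) ∣ Fintype.card F - 1)) :
    ∃ b : F, b ^ l ^ κ = (-1) ^ d := by
  rcases Nat.even_or_odd d with hd | hd
  · exact ⟨1, by rw [one_pow, hd.neg_one_pow]⟩
  rw [hd.neg_one_pow]
  rcases eq_or_ne l 2 with rfl | hl2
  · refine exists_pow_eq_neg_one ?_
    rw [← pow_succ']
    by_contra h
    exact hexc ⟨rfl, hd, h⟩
  · exact ⟨-1, (hl.odd_of_ne_two hl2).pow.neg_one_pow⟩

end FiniteField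

theorem stmt7_general (q : ℕ) (F Ω : Type*) [Field F] [Fintype F] (hq : Fintype.card F = q)
    [Field Ω] [Algebra F Ω]
    (l κ : ℕ) (hl : l.Prime) (hdvd : l ^ κ ∣ q - 1)
    (γ : F) (hγ : γ ≠ 0) (d : ℕ) (ε : F) (hε : ε = (-1) ^ d * γ)
    (hexc : ¬ (l = 2 ∧ Odd d ∧ ¬ 2 ^ (κ + 1) ∣ q - 1))
    (μ ν : Ω) (hμ : μ ^ l ^ κ = algebraMap F Ω ε) (hν : ν ^ l ^ κ = algebraMap F Ω γ) :
    F⟮μ⟯ = F⟮ν⟯ := by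
  subst hq hε
  obtain ⟨b, hb⟩ := FiniteField.exists_pow_prime_pow_eq_neg_one_pow hl hexc
  have hlκ : l ^ κ ≠ 0 := pow_ne_zero κ hl.ne_zero
  have hb0 : b ≠ 0 := by
    rintro rfl
    rw [zero_pow hlκ] at hb
    exact pow_ne_zero d (neg_ne_zero.mpr one_ne_zero) hb.symm
  have hν0 : ν ≠ 0 := by
    rintro rfl
    rw [zero_pow hlκ, eq_comm, map_eq_zero] at hν
    exact hγ hν
  have hμb : μ ^ l ^ κ = (algebraMap F Ω b * ν) ^ l ^ κ := by
    rw [hμ, mul_pow, ← map_pow, hb, hν, ← map_mul]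
  obtain ⟨c, hc, rfl⟩ := FiniteField.exists_eq_algebraMap_mul_of_pow_eq_pow hdvd
    (mul_ne_zero ((_root_.map_ne_zero _).mpr hb0) hν0) hμb
  rw [adjoin_simple_algebraMap_mul hc, adjoin_simple_algebraMap_mul hb0]

/-- Let `F` be a finite field with `q` elements, `Ω` an algebraic closure. Let `l` be
a prime and `κ ≥ 1` with `l ^ κ ∣ q - 1`. Let `γ ∈ F^*`, `d ≥ 0`, and
`ε = (-1) ^ d * γ`. Assume it is not the case that (`l = 2`, `d` odd, and
`2 ^ (κ + 1) ∤ q - 1`). Then for any `μ, ν ∈ Ω` with `μ ^ (l ^ κ) = ε` and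
`ν ^ (l ^ κ) = γ`, we have `F(μ) = F(ν)`. -/
theorem stmt7 (q : ℕ) (F Ω : Type*) [Field F] [Fintype F] (hq : Fintype.card F = q)
    [Field Ω] [Algebra F Ω] [IsAlgClosure F Ω]
    (l κ : ℕ) (hl : l.Prime) (hκ : 1 ≤ κ) (hdvd : l ^ κ ∣ q - 1)
    (γ : F) (hγ : γ ≠ 0) (d : ℕ) (ε : F) (hε : ε = (-1) ^ d * γ)
    (hexc : ¬ (l = 2 ∧ Odd d ∧ ¬ 2 ^ (κ + 1) ∣ q - 1))
    (μ ν : Ω) (hμ : μ ^ l ^ κ = algebraMap F Ω ε) (hν : ν ^ l ^ κ = algebraMap F Ω γ) :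
    F⟮μ⟯ = F⟮ν⟯ :=
  stmt7_general q F Ω hq l κ hl hdvd γ hγ d ε hε hexc μ ν hμ hν
end
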